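/- arXiv:0709.2593 — 5 statements merged into one kernel-verified Lean document; each statement's English description precedes it below -/
import Mathlib

section
/- For every integer n ≥ 4, (n+2) ∑_{k=2}^{n-2} B_k B_{n-k} = 2 ∑_{k=2}^{n-2} C(n+2,k) B_k B_{n-k} + n(n+1) B_n. -/
/-!
Write `B(t) = t / (e^t - 1)`. If `u + v = 1`, then `e^{ut} e^{vt} = e^t` gives, after dividing
by `(e^{ut} - 1)(e^{vt} - 1)`, the generating-function identity
`B(ut) B(vt) = B(t) (v B(ut) + u B(vt) + u v t)`.
Its coefficient of `t^n` is a polynomial identity in `u` (with `v = 1 - u`); integrating it over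
`u ∈ [0, 1]` with the Beta integral `∫₀¹ u^a (1-u)^b du = a! b! / (a+b+1)!` turns it into a
quadratic relation between Bernoulli numbers summed over all `k = 0, …, n`. For even `n` the
boundary terms `k ∈ {0, 1, n-1, n}` are explicit, which leaves Matiyasevich's identity; for odd
`n` both sides vanish.
-/

open Finset Nat

noncomputable section

namespace PowerSeries

variable (A : Type*) [CommRing A] [Algebra ℚ A]

def expSubOneDivX : A⟦X⟧ := mk fun n => algebraMap ℚ A (1 / (n + 1)!)

variable {A}

theorem X_mul_expSubOneDivX : X * expSubOneDivX A = exp A - 1 := by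
  ext (_ | n) <;> simp [expSubOneDivX, coeff_succ_X_mul, coeff_exp]

theorem bernoulliPowerSeries_mul_expSubOneDivX :
    bernoulliPowerSeries A * expSubOneDivX A = 1 :=
  X_mul_cancel <| by
    rw [mul_left_comm, X_mul_expSubOneDivX, bernoulliPowerSeries_mul_exp_sub_one, mul_one]

theorem rescale_X_mul_expSubOneDivX (u : A) :
    C u * X * rescale u (expSubOneDivX A) = rescale u (exp A) - 1 := by
  rw [← rescale_X, ← map_mul, X_mul_expSubOneDivX, map_sub, map_one]

theorem expSubOneDivX_eq_of_add_eq_one {u v : A} (huv : u + v = 1) :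
    C u * rescale u (expSubOneDivX A) + C v * rescale v (expSubOneDivX A)
      + C (u * v) * X * rescale u (expSubOneDivX A) * rescale v (expSubOneDivX A)
      = expSubOneDivX A := by
  have hexp := exp_mul_exp_eq_exp_add u v
  rw [huv, rescale_one, RingHom.id_apply] at hexp
  have hu := rescale_X_mul_expSubOneDivX u
  have hv := rescale_X_mul_expSubOneDivX v
  apply X_mul_cancel
  rw [map_mul]
  linear_combination hexp + (1 + C v * X * rescale v (expSubOneDivX A)) * hu
    + rescale u (exp A) * hv - X_mul_expSubOneDivX (A := A)

theorem rescale_bernoulliPowerSeries_mul_of_add_eq_one {u v : A} (huv : u + v = 1) :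
    rescale u (bernoulliPowerSeries A) * rescale v (bernoulliPowerSeries A) =
      bernoulliPowerSeries A * (C v * rescale u (bernoulliPowerSeries A)
        + C u * rescale v (bernoulliPowerSeries A) + C (u * v) * X) := by
  have hB := bernoulliPowerSeries_mul_expSubOneDivX (A := A)
  have hBu := congrArg (rescale u) hB
  have hBv := congrArg (rescale v) hB
  rw [map_mul, map_one] at hBu hBv
  have hg := expSubOneDivX_eq_of_add_eq_one huv
  set B := bernoulliPowerSeries A
  set g := expSubOneDivX A
  -- multiply `hg` by `B(t) B(ut) B(vt)` and cancel each `g` against its `B`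
  linear_combination -(rescale u B * rescale v B * B) * hg
    - rescale u B * rescale v B * hB + (C u * B * rescale v B) * hBu + (C v * B * rescale u B) * hBv
    + C (u * v) * X * B * (rescale v B * rescale v g * hBu + hBv)

theorem coeff_bernoulliPowerSeries (n : ℕ) :
    coeff n (bernoulliPowerSeries A) = algebraMap ℚ A (bernoulli n / n !) :=
  coeff_mk _ _

theorem sum_antidiagonal_bernoulli_smul_of_add_eq_one {u v : A} (huv : u + v = 1) (n : ℕ) :
    ∑ p ∈ antidiagonal (n + 1),
        (bernoulli p.1 / p.1 ! * (bernoulli p.2 / p.2 !)) • (u ^ p.1 * v ^ p.2) =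
      ∑ p ∈ antidiagonal (n + 1),
        (bernoulli p.1 / p.1 ! * (bernoulli p.2 / p.2 !)) • (v * u ^ p.2 + u * v ^ p.2)
      + (bernoulli n / n !) • (u * v) := by
  have h := congrArg (coeff (n + 1)) (rescale_bernoulliPowerSeries_mul_of_add_eq_one huv)
  rw [mul_add, mul_add, map_add, map_add, mul_left_comm _ (C v), mul_left_comm _ (C u),
    mul_left_comm _ (C (u * v)), coeff_C_mul, coeff_C_mul, coeff_C_mul, coeff_succ_mul_X] at h
  simp only [coeff_mul, coeff_rescale, coeff_bernoulliPowerSeries, mul_sum] at h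
  simp only [Algebra.smul_def, map_mul, mul_add, sum_add_distrib]
  convert h using 2
  · ring
  · congr 1 <;> exact sum_congr rfl fun _ _ => by ring
  · ring

end PowerSeries

namespace Polynomial

/-- `p ↦ ∫₀¹ p(x) dx`, defined on monomials. -/
def unitIntegral : ℚ[X] →ₗ[ℚ] ℚ := lsum fun k => (k + 1 : ℚ)⁻¹ • LinearMap.id

theorem unitIntegral_X_pow (a : ℕ) : unitIntegral (X ^ a) = (a + 1 : ℚ)⁻¹ := by
  simp [unitIntegral, X_pow_eq_monomial, lsum_apply, sum_monomial_index]

theorem unitIntegral_X_pow_mul_one_sub_X_pow (a b : ℕ) :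
    unitIntegral (X ^ a * (1 - X) ^ b) = (a ! * b ! : ℚ) / (a + b + 1)! := by
  induction b generalizing a with
  | zero =>
    rw [pow_zero, mul_one, unitIntegral_X_pow, add_zero, factorial_succ, factorial_zero]
    push_cast
    field_simp
  | succ b ih =>
    have hsplit : (X ^ a * (1 - X) ^ (b + 1) : ℚ[X]) =
        X ^ a * (1 - X) ^ b - X ^ (a + 1) * (1 - X) ^ b := by ring
    rw [hsplit, map_sub, ih, ih, show a + (b + 1) + 1 = a + b + 1 + 1 by ring,
      show a + 1 + b + 1 = a + b + 1 + 1 by ring, factorial_succ (a + b + 1), factorial_succ a,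
      factorial_succ b]
    push_cast
    field_simp
    ring

end Polynomial

end

namespace Finset

theorem sum_range_succ_eq_add_sum_Icc_add {M : Type*} [AddCommMonoid M] (f : ℕ → M) {n : ℕ}
    (hn : 3 ≤ n) :
    ∑ k ∈ range (n + 1), f k = f 0 + f 1 + ∑ k ∈ Icc 2 (n - 2), f k + f (n - 1) + f n := by
  obtain ⟨m, rfl⟩ : ∃ m, n = m + 3 := ⟨n - 3, by omega⟩
  have hIcc : ∑ k ∈ Icc 2 (m + 3 - 2), f k = ∑ k ∈ range m, f (k + 1 + 1) := by
    rw [show Icc 2 (m + 3 - 2) = Ico 2 (m + 2) by ext; simp; omega, sum_Ico_eq_sum_range]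
    exact sum_congr (by simp) fun k _ => by rw [add_comm, add_assoc]
  rw [sum_range_succ, sum_range_succ, sum_range_succ', sum_range_succ', hIcc,
    show m + 3 - 1 = m + 2 by omega]
  abel

end Finset

open Polynomial (X unitIntegral unitIntegral_X_pow_mul_one_sub_X_pow) in
theorem sum_antidiagonal_bernoulli_mul_div_factorial (n : ℕ) :
    ∑ p ∈ antidiagonal (n + 1), bernoulli p.1 * bernoulli p.2 / (n + 2)! =
      ∑ p ∈ antidiagonal (n + 1), 2 * bernoulli p.1 * bernoulli p.2 / (p.1 ! * (p.2 + 2)!)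
      + bernoulli n / (3 ! * n !) := by
  have h := congrArg unitIntegral <| PowerSeries.sum_antidiagonal_bernoulli_smul_of_add_eq_one
    (add_sub_cancel (X : Polynomial ℚ) 1) n
  have hpair (k : ℕ) :
      unitIntegral ((1 - X) * X ^ k + X * (1 - X) ^ k) = 2 * (k ! : ℚ) / (k + 2)! := by
    rw [show (1 - X) * X ^ k + X * (1 - X) ^ k =
        X ^ k * (1 - X : Polynomial ℚ) ^ 1 + X ^ 1 * (1 - X) ^ k by ring,
      map_add, unitIntegral_X_pow_mul_one_sub_X_pow, unitIntegral_X_pow_mul_one_sub_X_pow,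
      add_comm 1 k]
    ring
  have hsingle : unitIntegral (X * (1 - X)) = 1 / 3 ! := by
    rw [← pow_one (X * (1 - X)), mul_pow, unitIntegral_X_pow_mul_one_sub_X_pow]
    norm_num [factorial]
  simp only [map_add, map_sum, map_smul, smul_eq_mul, hpair, hsingle,
    unitIntegral_X_pow_mul_one_sub_X_pow] at h
  convert h using 3 with p hp
  · rw [mem_antidiagonal.mp hp]
    field_simp
  · field_simp
  · field_simp

theorem add_two_mul_sum_antidiagonal_bernoulli_mul {n : ℕ} (hn : n ≠ 0) :
    ((n : ℚ) + 2) * ∑ p ∈ antidiagonal n, bernoulli p.1 * bernoulli p.2 =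
      2 * ∑ p ∈ antidiagonal n, ((n + 2).choose p.1 : ℚ) * bernoulli p.1 * bernoulli p.2
      + ((n + 2).choose 3 : ℚ) * bernoulli (n - 1) := by
  obtain ⟨n, rfl⟩ := exists_eq_add_one_of_ne_zero hn
  have h := congrArg ((n + 3)! * · : ℚ → ℚ) (sum_antidiagonal_bernoulli_mul_div_factorial n)
  simp only [mul_add, mul_sum] at h
  rw [Nat.add_sub_cancel, show n + 1 + 2 = n + 3 by ring, mul_sum, mul_sum]
  convert h using 2 with p
  · rw [factorial_succ (n + 2)]
    push_cast
    field_simp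
    ring
  · refine sum_congr rfl fun p hp => ?_
    rw [show n + 3 = p.1 + (p.2 + 2) by have := mem_antidiagonal.mp hp; omega,
      cast_add_choose]
    field_simp
  · rw [show n + 3 = 3 + n by ring, cast_add_choose]
    field_simp

theorem bernoulli_mul_bernoulli_sub_eq_zero_of_odd {n k : ℕ} (hn : Odd n) (hk : 2 ≤ k)
    (hkn : k + 2 ≤ n) : bernoulli k * bernoulli (n - k) = 0 := by
  rcases Nat.even_or_odd k with hk_even | hk_odd
  · rw [bernoulli_eq_zero_of_odd (Nat.Odd.sub_even (by omega) hn hk_even) (by omega), mul_zero]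
  · rw [bernoulli_eq_zero_of_odd hk_odd (by omega), zero_mul]

/-- Matiyasevich's identity on Bernoulli numbers. -/
theorem matiyasevich_identity (n : ℕ) (hn : 4 ≤ n) :
    ((n : ℚ) + 2) * ∑ k ∈ Finset.Icc 2 (n - 2), bernoulli k * bernoulli (n - k) =
      2 * ∑ k ∈ Finset.Icc 2 (n - 2), ((n + 2).choose k : ℚ) * bernoulli k * bernoulli (n - k) +
      (n : ℚ) * ((n : ℚ) + 1) * bernoulli n := by
  rcases Nat.even_or_odd n with hev | hodd
  · have hn1 : bernoulli (n - 1) = 0 :=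
      bernoulli_eq_zero_of_odd (Nat.Even.sub_odd (by omega) hev odd_one) (by omega)
    have h := add_two_mul_sum_antidiagonal_bernoulli_mul (n := n) (by omega)
    rw [Nat.sum_antidiagonal_eq_sum_range_succ (fun i j => bernoulli i * bernoulli j),
      Nat.sum_antidiagonal_eq_sum_range_succ
        (fun i j => ((n + 2).choose i : ℚ) * bernoulli i * bernoulli j),
      sum_range_succ_eq_add_sum_Icc_add _ (by omega),
      sum_range_succ_eq_add_sum_Icc_add _ (by omega)] at h
    simp only [hn1, Nat.sub_zero, Nat.sub_self, show n - (n - 1) = 1 by omega, bernoulli_zero,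
      mul_zero, zero_mul, mul_one, Nat.choose_zero_right, Nat.cast_one, one_mul] at h
    rw [Nat.choose_symm_add, cast_choose_two] at h
    push_cast at h
    linear_combination h
  · have hz (k : ℕ) (hk : k ∈ Icc 2 (n - 2)) : bernoulli k * bernoulli (n - k) = 0 :=
      bernoulli_mul_bernoulli_sub_eq_zero_of_odd hodd (mem_Icc.mp hk).1 (by grind)
    rw [sum_eq_zero hz, sum_eq_zero fun k hk => by rw [mul_assoc, hz k hk, mul_zero],
      bernoulli_eq_zero_of_odd hodd (by omega)]
    ring
end

section
/- Let m, n be positive integers, r_1,…,r_m complex numbers, and set r_{m+1} = n − r_1 − ⋯ − r_m. Then for any complex x_1,…,x_m: r_{m+1} ∑_{k_1+⋯+k_m=n, k_i≥0} ∏_{j=1}^m C(r_j,k_j) B_{k_j}(x_j) = − ∑_{i=1}^m r_i ∑_{k_1+⋯+k_m=n, k_i≥0} C(r_{m+1},k_i) B_{k_i}(1−x_i) ∏_{j≠i} C(r_j,k_j) B_{k_j}(x_j − x_i + 1_{j>i}), where 1_{j>i} equals 1 if j > i and 0 otherwise. -/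
/-!
Write `W_ν(ρ; y) = ∑_{|k| = ν} ∏_j C(ρ_j, k_j) B_{k_j}(y_j)` and
`S_ν(ρ; y) = ∑_i ρ_i W_ν(ρ with ρ_i := 0; (y_j - y_i + [i < j])_j)`. For the `m + 1` weights
`(r_{m+1}, r_1, …, r_m)`, which sum to `n`, and the points `(1, x_1, …, x_m)`, the identity says
exactly `S_n = 0`; so it suffices to show `S_ν(ρ; y) = 0` whenever `∑ ρ = ν`, by induction on `ν`.

From `B_k' = k B_{k-1}`, `k C(r, k) = r C(r - 1, k - 1)` and
`∑_l ρ_l W_ν(ρ - e_l; y) = (∑ ρ - ν) W_ν(ρ; y)` one gets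
`d/ds S_{ν+1}(ρ; s y) = ∑_l y_l ρ_l S_ν(ρ - e_l; s y)`, which vanishes by induction. Hence
`S_{ν+1}(ρ; y) = S_{ν+1}(ρ; 0)`, and at `y = 0` the relation `B_k(1) - B_k(0) = [k = 1]` makes the
sum telescope to `W_{ν+2}(ρ; 1) - W_{ν+2}(ρ; 0)`, which is `0` because `W_{ν+2}(ρ; ·)` is
translation invariant when `∑ ρ = ν + 1`.
-/

/-- The `n`-th Bernoulli polynomial evaluated at a complex number. -/
noncomputable def Bp (n : ℕ) (x : ℂ) : ℂ := Polynomial.aeval x (Polynomial.bernoulli n)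

/-- The generalized binomial coefficient `C(r,k) = r(r-1)⋯(r-k+1)/k!` for complex `r`. -/
noncomputable def gchoose (r : ℂ) (k : ℕ) : ℂ :=
  (∏ i ∈ Finset.range k, (r - i)) / (k.factorial : ℂ)

open Finset Function

lemma gchoose_zero_right (r : ℂ) : gchoose r 0 = 1 := by simp [gchoose]

lemma gchoose_one_right (r : ℂ) : gchoose r 1 = r := by simp [gchoose]

lemma gchoose_zero_succ (k : ℕ) : gchoose 0 (k + 1) = 0 := by
  simp [gchoose, prod_range_succ']

lemma mul_gchoose_sub_one (r : ℂ) (k : ℕ) :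
    r * gchoose (r - 1) k = (r - k) * gchoose r k := by
  have shift : r * ∏ i ∈ range k, (r - 1 - i) = (∏ i ∈ range k, (r - i)) * (r - k) := by
    rw [← prod_range_succ, prod_range_succ']
    push_cast
    simp only [sub_sub, add_comm (1 : ℂ), sub_zero]
    ring
  simp only [gchoose, mul_div_assoc', shift]
  ring

lemma succ_mul_gchoose_succ (r : ℂ) (k : ℕ) :
    ((k : ℂ) + 1) * gchoose r (k + 1) = r * gchoose (r - 1) k := by
  rw [mul_gchoose_sub_one, gchoose, gchoose, prod_range_succ, Nat.factorial_succ]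
  push_cast
  field_simp

lemma Bp_zero (x : ℂ) : Bp 0 x = 1 := by simp [Bp]

lemma Bp_one_sub_Bp_zero (k : ℕ) : Bp k 1 - Bp k 0 = if k = 1 then 1 else 0 := by
  have eval_rat (q : ℚ) :
      Bp k (algebraMap ℚ ℂ q) = algebraMap ℚ ℂ ((Polynomial.bernoulli k).eval q) := by
    rw [Bp, Polynomial.aeval_algebraMap_apply, Polynomial.coe_aeval_eq_eval]
  rw [← map_one (algebraMap ℚ ℂ), ← map_zero (algebraMap ℚ ℂ), eval_rat, eval_rat,
    Polynomial.bernoulli_eval_one, Polynomial.bernoulli_eval_zero]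
  rcases eq_or_ne k 1 with rfl | hk
  · norm_num
  · simp [bernoulli_eq_bernoulli'_of_ne_one hk, hk]

lemma hasDerivAt_Bp (k : ℕ) (x : ℂ) : HasDerivAt (Bp k) (k * Bp (k - 1) x) x := by
  have h := (Polynomial.bernoulli k).hasDerivAt_aeval x
  simp only [Polynomial.derivative_bernoulli, map_mul, map_natCast] at h
  exact h

namespace Finset.Nat

variable {M : ℕ} {β : Type*} [AddCommMonoid β]

lemma sum_antidiagonalTuple_succ_eq_sum_add_single (ν : ℕ) (l : Fin M) (f : (Fin M → ℕ) → β)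
    (hf : ∀ k, k l = 0 → f k = 0) :
    ∑ k ∈ antidiagonalTuple M (ν + 1), f k
      = ∑ k ∈ antidiagonalTuple M ν, f (k + Pi.single l 1) := by
  symm
  refine sum_bij_ne_zero (fun k _ _ => k + Pi.single l 1) (fun k hk _ => ?_)
    (fun _ _ _ _ _ _ h => add_right_cancel h) (fun k hk hfk => ?_) (fun _ _ _ => rfl)
  · simp_all [mem_antidiagonalTuple, sum_add_distrib]
  · have hl : k l ≠ 0 := fun h => hfk (hf k h)
    have hk' : k - Pi.single l 1 + Pi.single l 1 = k := by
      ext j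
      rcases eq_or_ne j l with rfl | hj <;> simp [*]
      omega
    refine ⟨k - Pi.single l 1, ?_, by rwa [hk'], hk'⟩
    rw [mem_antidiagonalTuple] at hk ⊢
    rw [← hk', Pi.add_def, sum_add_distrib] at hk
    simpa using hk

lemma sum_antidiagonalTuple_succ_eq_sum_cons_zero (ν : ℕ) (f : (Fin (M + 1) → ℕ) → β)
    (hf : ∀ k, k 0 ≠ 0 → f k = 0) :
    ∑ k ∈ antidiagonalTuple (M + 1) ν, f k = ∑ k ∈ antidiagonalTuple M ν, f (Fin.cons 0 k) := by
  symm
  refine sum_bij_ne_zero (fun k _ _ => Fin.cons 0 k) (fun k hk _ => ?_)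
    (fun _ _ _ _ _ _ h => (Fin.cons_right_injective 0) h) (fun k hk hfk => ?_) (fun _ _ _ => rfl)
  · simpa [mem_antidiagonalTuple, Fin.sum_cons] using hk
  · have h0 : k 0 = 0 := not_not.1 fun h => hfk (hf k h)
    have hk' : Fin.cons 0 (Fin.tail k) = k := by rw [← h0, Fin.cons_self_tail]
    refine ⟨Fin.tail k, ?_, by rwa [hk'], hk'⟩
    simpa [mem_antidiagonalTuple, Fin.sum_univ_succ, h0, Fin.tail] using hk

lemma sum_antidiagonalTuple_comp_perm (ν : ℕ) (σ : Equiv.Perm (Fin M)) (f : (Fin M → ℕ) → β) :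
    ∑ k ∈ antidiagonalTuple M ν, f (k ∘ σ) = ∑ k ∈ antidiagonalTuple M ν, f k := by
  refine sum_nbij' (· ∘ σ) (· ∘ σ.symm) (fun k hk => ?_) (fun k hk => ?_) (fun k _ => ?_)
    (fun k _ => ?_) (fun _ _ => rfl)
  · simpa [mem_antidiagonalTuple, Equiv.sum_comp σ k] using hk
  · simpa [mem_antidiagonalTuple, Equiv.sum_comp σ.symm k] using hk
  · ext; simp
  · ext; simp

end Finset.Nat

lemma prod_update_eq_mul_prod_erase {ι α β : Type*} [Fintype ι] [DecidableEq ι] [CommMonoid β]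
    (g : ι → α → β) (v : ι → α) (l : ι) (a : α) :
    ∏ j, g j (update v l a j) = g l a * ∏ j ∈ univ.erase l, g j (v j) := by
  rw [← mul_prod_erase _ _ (mem_univ l), update_self]
  congr 1
  exact prod_congr rfl fun j hj => by rw [update_of_ne (ne_of_mem_erase hj)]

lemma sum_update_eq_sub_add {ι G : Type*} [Fintype ι] [DecidableEq ι] [AddCommGroup G]
    (f : ι → G) (i : ι) (b : G) : ∑ j, update f i b j = ∑ j, f j - f i + b := by
  rw [sum_update_of_mem (mem_univ i), sum_eq_sum_sdiff_singleton_add (mem_univ i) f]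
  abel

lemma Fin.cons_comp_swap_zero_succ {α : Type*} {M : ℕ} (a : α) (z : Fin M → α) (i : Fin M) :
    Fin.cons a z ∘ Equiv.swap 0 i.succ = Fin.cons (z i) (update z i a) := by
  ext j
  cases j using Fin.cases with
  | zero => simp
  | succ j =>
    rcases eq_or_ne j i with rfl | hj
    · simp
    · simp [Equiv.swap_apply_def, hj]

noncomputable def bernoulliSum {M : ℕ} (ν : ℕ) (ρ y : Fin M → ℂ) : ℂ :=
  ∑ k ∈ Nat.antidiagonalTuple M ν, ∏ j, gchoose (ρ j) (k j) * Bp (k j) (y j)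

section bernoulliSum

variable {M : ℕ}

lemma bernoulliSum_zero (ρ y : Fin M → ℂ) : bernoulliSum 0 ρ y = 1 := by
  simp [bernoulliSum, Nat.antidiagonalTuple_zero_right, gchoose_zero_right, Bp_zero]

lemma bernoulliSum_comp_perm (ν : ℕ) (ρ y : Fin M → ℂ) (σ : Equiv.Perm (Fin M)) :
    bernoulliSum ν (ρ ∘ σ) (y ∘ σ) = bernoulliSum ν ρ y := by
  rw [bernoulliSum, bernoulliSum, ← Nat.sum_antidiagonalTuple_comp_perm ν σ]
  exact sum_congr rfl fun k _ =>
    Equiv.prod_comp σ fun j => gchoose (ρ j) (k j) * Bp (k j) (y j)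

lemma bernoulliSum_cons_zero (ν : ℕ) (ρ y : Fin M → ℂ) (a : ℂ) :
    bernoulliSum ν (Fin.cons 0 ρ) (Fin.cons a y) = bernoulliSum ν ρ y := by
  rw [bernoulliSum, Nat.sum_antidiagonalTuple_succ_eq_sum_cons_zero]
  · simp [bernoulliSum, Fin.prod_univ_succ, gchoose_zero_right, Bp_zero]
  · intro k hk
    obtain ⟨i, hi⟩ := Nat.exists_eq_succ_of_ne_zero hk
    exact prod_eq_zero (mem_univ 0) (by simp [hi, gchoose_zero_succ])

lemma bernoulliSum_update_cons_succ_zero (ν : ℕ) (c a : ℂ) (ρ y : Fin M → ℂ) (i : Fin M) :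
    bernoulliSum ν (update (Fin.cons c ρ) i.succ 0) (Fin.cons a y)
      = bernoulliSum ν (update ρ i c) (update y i a) := by
  rw [← bernoulliSum_comp_perm _ _ _ (Equiv.swap 0 i.succ), ← Fin.cons_update,
    Fin.cons_comp_swap_zero_succ, Fin.cons_comp_swap_zero_succ, update_self, update_idem,
    bernoulliSum_cons_zero]

lemma bernoulliSum_update_update (ν : ℕ) (ρ y : Fin M → ℂ) (i : Fin M) (c a : ℂ) :
    bernoulliSum ν (update ρ i c) (update y i a)
      = ∑ k ∈ Nat.antidiagonalTuple M ν, gchoose c (k i) * Bp (k i) a *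
          ∏ j ∈ univ.erase i, gchoose (ρ j) (k j) * Bp (k j) (y j) := by
  refine sum_congr rfl fun k _ => ?_
  rw [← mul_prod_erase _ _ (mem_univ i), update_self, update_self]
  congr 1
  exact prod_congr rfl fun j hj => by simp [update_of_ne (ne_of_mem_erase hj)]

lemma sum_mul_bernoulliSum_update_sub_one (ν : ℕ) (ρ y : Fin M → ℂ) :
    ∑ l, ρ l * bernoulliSum ν (update ρ l (ρ l - 1)) y
      = ((∑ l, ρ l) - ν) * bernoulliSum ν ρ y := by
  simp only [bernoulliSum, mul_sum]
  rw [sum_comm]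
  refine sum_congr rfl fun k hk => ?_
  have hν : ∑ l, (k l : ℂ) = ν := by exact_mod_cast Nat.mem_antidiagonalTuple.1 hk
  calc ∑ l, ρ l * ∏ j, gchoose (update ρ l (ρ l - 1) j) (k j) * Bp (k j) (y j)
      = ∑ l, (ρ l - k l) * ∏ j, gchoose (ρ j) (k j) * Bp (k j) (y j) := by
        refine sum_congr rfl fun l _ => ?_
        rw [prod_update_eq_mul_prod_erase (fun j r => gchoose r (k j) * Bp (k j) (y j)),
          ← mul_prod_erase _ _ (mem_univ l)]
        linear_combination
          (Bp (k l) (y l) * ∏ j ∈ univ.erase l, gchoose (ρ j) (k j) * Bp (k j) (y j))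
            * mul_gchoose_sub_one (ρ l) (k l)
    _ = _ := by rw [← sum_mul, sum_sub_distrib, hν]

lemma hasDerivAt_bernoulliSum (ν : ℕ) (ρ u v : Fin M → ℂ) (t : ℂ) :
    HasDerivAt (fun s : ℂ => bernoulliSum (ν + 1) ρ (u + s • v))
      (∑ l, v l * ρ l * bernoulliSum ν (update ρ l (ρ l - 1)) (u + t • v)) t := by
  set y := u + t • v
  have hfactor (k : Fin M → ℕ) (j : Fin M) :
      HasDerivAt (fun s : ℂ => gchoose (ρ j) (k j) * Bp (k j) ((u + s • v) j))
        (gchoose (ρ j) (k j) * (k j * Bp (k j - 1) (y j) * v j)) t := by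
    have hline : HasDerivAt (fun s : ℂ => (u + s • v) j) (v j) t := by
      simpa using ((hasDerivAt_id t).mul_const (v j)).const_add (u j)
    exact ((hasDerivAt_Bp (k j) _).comp t hline).const_mul _
  refine (HasDerivAt.fun_sum fun k (_ : k ∈ Nat.antidiagonalTuple M (ν + 1)) =>
    HasDerivAt.fun_finsetProd fun j _ => hfactor k j).congr_deriv ?_
  rw [sum_comm]
  refine sum_congr rfl fun l _ => ?_
  rw [Nat.sum_antidiagonalTuple_succ_eq_sum_add_single ν l _ (fun k hk => by simp [hk]),
    bernoulliSum, mul_sum]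
  refine sum_congr rfl fun k _ => ?_
  set rest := ∏ j ∈ univ.erase l, gchoose (ρ j) (k j) * Bp (k j) (y j)
  have hrest : ∏ j ∈ univ.erase l, gchoose (ρ j) ((k + Pi.single l 1 : Fin M → ℕ) j)
      * Bp ((k + Pi.single l 1 : Fin M → ℕ) j) (y j) = rest :=
    prod_congr rfl fun j hj => by simp [ne_of_mem_erase hj]
  rw [prod_update_eq_mul_prod_erase (fun j r => gchoose r (k j) * Bp (k j) (y j)), smul_eq_mul,
    hrest]
  simp only [Pi.add_apply, Pi.single_eq_same, Nat.add_sub_cancel, Nat.cast_add, Nat.cast_one]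
  linear_combination (v l * Bp (k l) (y l) * rest) * succ_mul_gchoose_succ (ρ l) (k l)

lemma bernoulliSum_add_const {ν : ℕ} {ρ : Fin M → ℂ} (hρ : ∑ l, ρ l = ν) (y : Fin M → ℂ)
    (a : ℂ) : bernoulliSum (ν + 1) ρ (fun j => y j + a) = bernoulliSum (ν + 1) ρ y := by
  have hderiv (t : ℂ) : HasDerivAt (fun s : ℂ => bernoulliSum (ν + 1) ρ (y + s • 1)) 0 t := by
    convert hasDerivAt_bernoulliSum ν ρ y 1 t using 1
    simp [sum_mul_bernoulliSum_update_sub_one, hρ]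
  have h := is_const_of_deriv_eq_zero (fun t => (hderiv t).differentiableAt)
    (fun t => (hderiv t).deriv) a 0
  rw [show (fun j => y j + a) = y + a • 1 by ext; simp]
  simpa using h

lemma bernoulliSum_update_one_sub_update_zero (ν : ℕ) (ρ y : Fin M → ℂ) (l : Fin M) :
    bernoulliSum (ν + 1) ρ (update y l 1) - bernoulliSum (ν + 1) ρ (update y l 0)
      = ρ l * bernoulliSum ν (update ρ l 0) y := by
  set rest : (Fin M → ℕ) → ℂ := fun k =>
    ∏ j ∈ univ.erase l, gchoose (ρ j) (k j) * Bp (k j) (y j)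
  have hdiff (k : Fin M → ℕ) :
      (∏ j, gchoose (ρ j) (k j) * Bp (k j) (update y l 1 j))
        - ∏ j, gchoose (ρ j) (k j) * Bp (k j) (update y l 0 j)
      = gchoose (ρ l) (k l) * (if k l = 1 then 1 else 0) * rest k := by
    simp only [prod_update_eq_mul_prod_erase (fun j z => gchoose (ρ j) (k j) * Bp (k j) z),
      ← Bp_one_sub_Bp_zero]
    ring
  rw [bernoulliSum, bernoulliSum, ← sum_sub_distrib, sum_congr rfl fun k _ => hdiff k,
    Nat.sum_antidiagonalTuple_succ_eq_sum_add_single ν l _ (fun k hk => by simp [hk]),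
    bernoulliSum, mul_sum]
  refine sum_congr rfl fun k _ => ?_
  have hrest : rest (k + Pi.single l 1) = rest k :=
    prod_congr rfl fun j hj => by simp [ne_of_mem_erase hj]
  rw [hrest, prod_update_eq_mul_prod_erase (fun j r => gchoose r (k j) * Bp (k j) (y j))]
  rcases Nat.eq_zero_or_eq_succ_pred (k l) with h | h <;>
    rw [Pi.add_apply, Pi.single_eq_same, h]
  · simp [gchoose_one_right, gchoose_zero_right, Bp_zero, rest]
  · simp [gchoose_zero_succ]

end bernoulliSum

def shiftVec {M : ℕ} (y : Fin M → ℂ) (i : Fin M) : Fin M → ℂ :=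
  fun j => y j - y i + if i < j then 1 else 0

lemma shiftVec_cons_zero {M : ℕ} (a : ℂ) (y : Fin M → ℂ) :
    shiftVec (Fin.cons a y) 0 = Fin.cons 0 (fun j => y j - a + 1) := by
  ext j
  cases j using Fin.cases <;> simp [shiftVec]

lemma shiftVec_cons_succ {M : ℕ} (a : ℂ) (y : Fin M → ℂ) (i : Fin M) :
    shiftVec (Fin.cons a y) i.succ = Fin.cons (a - y i) (shiftVec y i) := by
  ext j
  cases j using Fin.cases <;> simp [shiftVec]

noncomputable def shiftedBernoulliSum {M : ℕ} (ν : ℕ) (ρ y : Fin M → ℂ) : ℂ :=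
  ∑ i, ρ i * bernoulliSum ν (update ρ i 0) (shiftVec y i)

section shiftedBernoulliSum

variable {M : ℕ}

lemma shiftedBernoulliSum_zero_right {ν : ℕ} {ρ : Fin M → ℂ} (hρ : ∑ l, ρ l = ν + 1) :
    shiftedBernoulliSum (ν + 1) ρ 0 = 0 := by
  set ind : ℕ → Fin M → ℂ := fun l j => if l ≤ (j : ℕ) then 1 else 0
  set H : ℕ → ℂ := fun l => bernoulliSum (ν + 2) ρ (ind l)
  have hind (i : Fin M) :
      update (ind (i + 1)) i 1 = ind i ∧ update (ind (i + 1)) i 0 = ind (i + 1) ∧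
        shiftVec 0 i = ind (i + 1) := by
    refine ⟨?_, ?_, ?_⟩ <;> ext j <;>
      simp only [ind, shiftVec, update_apply, Fin.ext_iff, Fin.lt_def, Pi.zero_apply] <;>
      split_ifs <;> first | (exfalso; omega) | norm_num
  have hstep (i : Fin M) :
      ρ i * bernoulliSum (ν + 1) (update ρ i 0) (shiftVec 0 i) = H i - H (i + 1) := by
    obtain ⟨h1, h0, hshift⟩ := hind i
    rw [hshift, ← bernoulliSum_update_one_sub_update_zero, h1, h0]
  have hends : H 0 = H M := by
    have hM : ind M = 0 := by
      ext j
      simp [ind, j.isLt]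
    have h := bernoulliSum_add_const (by exact_mod_cast hρ : ∑ l, ρ l = ((ν + 1 : ℕ) : ℂ)) 0 1
    simpa [H, ind, hM] using h
  rw [shiftedBernoulliSum, sum_congr rfl fun i _ => hstep i,
    Fin.sum_univ_eq_sum_range (fun i => H i - H (i + 1)), sum_range_sub', hends, sub_self]

lemma mul_shiftedBernoulliSum_update_sub_one (ν : ℕ) (ρ z : Fin M → ℂ) (l : Fin M) :
    ρ l * shiftedBernoulliSum ν (update ρ l (ρ l - 1)) z
      = ∑ i, ρ i * (update ρ i 0 l
          * bernoulliSum ν (update (update ρ i 0) l (update ρ i 0 l - 1)) (shiftVec z i))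
        + ρ l * (ρ l - 1) * bernoulliSum ν (update ρ l 0) (shiftVec z l) := by
  rw [shiftedBernoulliSum, mul_sum, ← add_sum_erase _ _ (mem_univ l),
    ← add_sum_erase _ _ (mem_univ l)]
  simp only [update_self, update_idem, zero_sub, zero_mul, mul_zero, zero_add]
  rw [add_comm]
  congr 1
  · refine sum_congr rfl fun i hi => ?_
    have hil := ne_of_mem_erase hi
    rw [update_of_ne hil, update_of_ne hil.symm, update_comm hil]
    ring
  · ring

lemma hasDerivAt_shiftedBernoulliSum_smul {ν : ℕ} {ρ : Fin M → ℂ} (hρ : ∑ l, ρ l = ν + 1)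
    (y : Fin M → ℂ) (t : ℂ) :
    HasDerivAt (fun s : ℂ => shiftedBernoulliSum (ν + 1) ρ (s • y))
      (∑ l, y l * ρ l * shiftedBernoulliSum ν (update ρ l (ρ l - 1)) (t • y)) t := by
  set z := t • y
  set A : Fin M → Fin M → ℂ := fun i l =>
    update ρ i 0 l * bernoulliSum ν (update (update ρ i 0) l (update ρ i 0 l - 1)) (shiftVec z i)
  have hline (i : Fin M) (s : ℂ) : shiftVec (s • y) i
      = (fun j => if i < j then 1 else 0) + s • (fun j => y j - y i) := by
    ext j
    simp only [shiftVec, Pi.smul_apply, Pi.add_apply, smul_eq_mul]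
    ring
  have hderiv := HasDerivAt.fun_sum fun i (_ : i ∈ univ) =>
    (hasDerivAt_bernoulliSum ν (update ρ i 0) (fun j => if i < j then 1 else 0)
      (fun j => y j - y i) t).const_mul (ρ i)
  simp only [← hline] at hderiv
  refine hderiv.congr_deriv ?_
  have hinner (i : Fin M) :
      ∑ l, A i l = (1 - ρ i) * bernoulliSum ν (update ρ i 0) (shiftVec z i) := by
    rw [sum_mul_bernoulliSum_update_sub_one, sum_update_eq_sub_add, hρ]
    ring
  have houter (l : Fin M) : ∑ i, ρ i * A i l
      = ρ l * shiftedBernoulliSum ν (update ρ l (ρ l - 1)) z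
        - ρ l * (ρ l - 1) * bernoulliSum ν (update ρ l 0) (shiftVec z l) := by
    rw [mul_shiftedBernoulliSum_update_sub_one]
    ring
  calc ∑ i, ρ i * ∑ l, (y l - y i) * update ρ i 0 l
        * bernoulliSum ν (update (update ρ i 0) l (update ρ i 0 l - 1)) (shiftVec z i)
      = ∑ i, ∑ l, (y l * (ρ i * A i l) - ρ i * y i * A i l) :=
        sum_congr rfl fun i _ => by
          rw [mul_sum]
          exact sum_congr rfl fun l _ => by ring
    _ = ∑ l, y l * ∑ i, ρ i * A i l - ∑ i, ρ i * y i * ∑ l, A i l := by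
        simp only [sum_sub_distrib, mul_sum]
        rw [sum_comm]
    _ = _ := by
        simp only [houter, hinner, ← sum_sub_distrib]
        exact sum_congr rfl fun l _ => by ring

theorem shiftedBernoulliSum_eq_zero {ν : ℕ} {ρ : Fin M → ℂ} (hρ : ∑ l, ρ l = ν)
    (y : Fin M → ℂ) : shiftedBernoulliSum ν ρ y = 0 := by
  induction ν generalizing ρ y with
  | zero => simp [shiftedBernoulliSum, bernoulliSum_zero, hρ]
  | succ ν ih =>
    push_cast at hρ
    have hderiv (t : ℂ) :
        HasDerivAt (fun s : ℂ => shiftedBernoulliSum (ν + 1) ρ (s • y)) 0 t := by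
      refine (hasDerivAt_shiftedBernoulliSum_smul hρ y t).congr_deriv
        (sum_eq_zero fun l _ => ?_)
      rw [ih (by rw [sum_update_eq_sub_add, hρ]; ring), mul_zero]
    have h := is_const_of_deriv_eq_zero (fun t => (hderiv t).differentiableAt)
      (fun t => (hderiv t).deriv) 1 0
    simpa [shiftedBernoulliSum_zero_right hρ] using h

end shiftedBernoulliSum

theorem symmetric_bernoulli_general (m n : ℕ) (r x : Fin m → ℂ) :
    ((n : ℂ) - ∑ j, r j) *
      ∑ k ∈ Finset.Nat.antidiagonalTuple m n, ∏ j, gchoose (r j) (k j) * Bp (k j) (x j) =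
    - ∑ i, r i *
      ∑ k ∈ Finset.Nat.antidiagonalTuple m n,
        gchoose ((n : ℂ) - ∑ j, r j) (k i) * Bp (k i) (1 - x i) *
          ∏ j ∈ Finset.univ.erase i,
            gchoose (r j) (k j) * Bp (k j) (x j - x i + if i < j then 1 else 0) := by
  set c := (n : ℂ) - ∑ j, r j
  have h := shiftedBernoulliSum_eq_zero (ν := n) (ρ := Fin.cons c r) (by simp [Fin.sum_cons, c])
    (Fin.cons 1 x)
  rw [shiftedBernoulliSum, Fin.sum_univ_succ, shiftVec_cons_zero, Fin.update_cons_zero,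
    bernoulliSum_cons_zero] at h
  simp only [Fin.cons_zero, Fin.cons_succ, shiftVec_cons_succ, bernoulliSum_update_cons_succ_zero,
    bernoulliSum_update_update, sub_add_cancel] at h
  simp only [bernoulliSum, shiftVec] at h
  linear_combination h

/-- Main theorem: symmetric identity for products of `m` Bernoulli polynomials,
with `r_{m+1} = n - r_1 - ⋯ - r_m`. -/
theorem symmetric_bernoulli (m n : ℕ) (hm : 0 < m) (hn : 0 < n)
    (r x : Fin m → ℂ) :
    ((n : ℂ) - ∑ j, r j) *
      ∑ k ∈ Finset.Nat.antidiagonalTuple m n, ∏ j, gchoose (r j) (k j) * Bp (k j) (x j) =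
    - ∑ i, r i *
      ∑ k ∈ Finset.Nat.antidiagonalTuple m n,
        gchoose ((n : ℂ) - ∑ j, r j) (k i) * Bp (k i) (1 - x i) *
          ∏ j ∈ Finset.univ.erase i,
            gchoose (r j) (k j) * Bp (k j) (x j - x i + if i < j then 1 else 0) :=
  symmetric_bernoulli_general m n r x
end

section
/- As an identity of formal power series (or of analytic functions near 0) in variables t_1,…,t_m: (t_1+⋯+t_m) ∏_{j=1}^m (t_j e^{x_j t_j}/(e^{t_j}−1)) = ∑_{i=1}^m [t_i (t_1+⋯+t_m) e^{x_i(t_1+⋯+t_m)}/(e^{t_1+⋯+t_m}−1)] ∏_{j≠i} (t_j e^{(x_j − x_i + 1_{j>i}) t_j}/(e^{t_j}−1)), where 1_{j>i} = 1 if j>i and 0 otherwise. -/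
/-!
Write `G_j = t_j e^{x_j t_j}/(e^{t_j} - 1)` and `S = t_1 + ⋯ + t_m`. Since the `j = i` factor of
the `i`-th product is `t_i/(e^{t_i} - 1)`, the `i`-th summand on the right equals
`S ∏_j G_j / (e^S - 1)` times `(e^{t_i} - 1) e^{∑_{j>i} t_j}`: the powers `e^{x_i t_j}` cancel
against `e^{x_i S}`. Summing over `i`, these weights telescope to `e^S - 1`.
-/

open Finset Complex

theorem Fin.sum_sub_one_mul_prod_Ioi {R : Type*} [CommRing R] :
    ∀ {m : ℕ} (f : Fin m → R), ∑ i, (f i - 1) * ∏ j ∈ Ioi i, f j = ∏ j, f j - 1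
  | 0, _ => by simp
  | m + 1, f => by
    rw [Fin.sum_univ_succ, Fin.prod_univ_succ, Fin.prod_Ioi_zero]
    simp only [Fin.prod_Ioi_succ]
    rw [Fin.sum_sub_one_mul_prod_Ioi]
    ring

theorem Complex.sum_exp_sub_one_mul_exp_sum_Ioi {m : ℕ} (t : Fin m → ℂ) :
    ∑ i, (exp (t i) - 1) * exp (∑ j ∈ Ioi i, t j) = exp (∑ j, t j) - 1 := by
  simp only [exp_sum]
  exact Fin.sum_sub_one_mul_prod_Ioi fun j => exp (t j)

/-- `t e^{xt}/(e^t - 1) = ∑ₙ Bₙ(x) tⁿ/n!`, the generating function of Bernoulli polynomials. -/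
noncomputable def bernoulliGenFun (x t : ℂ) : ℂ :=
  t * exp (x * t) / (exp t - 1)

theorem bernoulliGenFun_add (x y t : ℂ) :
    bernoulliGenFun (x + y) t = bernoulliGenFun x t * exp (y * t) := by
  rw [bernoulliGenFun, bernoulliGenFun, add_mul, exp_add]
  ring

theorem sub_one_mul_bernoulliGenFun_zero {t : ℂ} (ht : exp t ≠ 1) :
    (exp t - 1) * bernoulliGenFun 0 t = t := by
  rw [bernoulliGenFun, zero_mul, exp_zero, mul_one]
  exact mul_div_cancel₀ t (sub_ne_zero.mpr ht)

theorem prod_bernoulliGenFun_shift {m : ℕ} (x t : Fin m → ℂ) (i : Fin m) :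
    ∏ j, bernoulliGenFun (x j - x i + if i < j then 1 else 0) (t j) =
      exp (∑ j ∈ Ioi i, t j - x i * ∑ j, t j) * ∏ j, bernoulliGenFun (x j) (t j) := by
  have hshift : ∀ j, x j - x i + (if i < j then 1 else 0) =
      x j + ((if i < j then 1 else 0) - x i) := fun j => by ring
  have hexponent : ∑ j, ((if i < j then 1 else 0) - x i) * t j =
      ∑ j ∈ Ioi i, t j - x i * ∑ j, t j := by
    simp only [sub_mul, ite_mul, one_mul, zero_mul, sum_sub_distrib, ← sum_filter,
      filter_lt_eq_Ioi, mul_sum]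
  simp only [hshift, bernoulliGenFun_add, prod_mul_distrib, ← exp_sum]
  rw [hexponent, mul_comm]

theorem mul_prod_erase_bernoulliGenFun_shift {m : ℕ} (x t : Fin m → ℂ) (i : Fin m)
    (hi : exp (t i) ≠ 1) :
    t i * ∏ j ∈ univ.erase i, bernoulliGenFun (x j - x i + if i < j then 1 else 0) (t j) =
      (exp (t i) - 1) * exp (∑ j ∈ Ioi i, t j - x i * ∑ j, t j) *
        ∏ j, bernoulliGenFun (x j) (t j) := by
  rw [mul_assoc, ← prod_bernoulliGenFun_shift, ← mul_prod_erase univ _ (mem_univ i),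
    ← mul_assoc]
  simp only [sub_self, lt_self_iff_false, if_false, add_zero]
  rw [sub_one_mul_bernoulliGenFun_zero hi]

/-- Stated pointwise wherever the denominators are nonzero, which is equivalent to the identity
of analytic functions near `0`. -/
theorem generating_identity (m : ℕ) (x t : Fin m → ℂ)
    (h : ∀ j, Complex.exp (t j) ≠ 1) (hsum : Complex.exp (∑ j, t j) ≠ 1) :
    (∑ j, t j) * ∏ j, t j * Complex.exp (x j * t j) / (Complex.exp (t j) - 1) =
    ∑ i, t i * (∑ j, t j) * Complex.exp (x i * ∑ j, t j) /
        (Complex.exp (∑ j, t j) - 1) *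
      ∏ j ∈ Finset.univ.erase i,
        t j * Complex.exp ((x j - x i + if i < j then 1 else 0) * t j) /
          (Complex.exp (t j) - 1) := by
  set S := ∑ j, t j
  set G := ∏ j, bernoulliGenFun (x j) (t j)
  have hterm : ∀ i, t i * S * exp (x i * S) / (exp S - 1) *
      ∏ j ∈ univ.erase i, bernoulliGenFun (x j - x i + if i < j then 1 else 0) (t j) =
        S * G / (exp S - 1) * ((exp (t i) - 1) * exp (∑ j ∈ Ioi i, t j)) := by
    intro i
    have hcancel :
        exp (x i * S) * exp (∑ j ∈ Ioi i, t j - x i * S) = exp (∑ j ∈ Ioi i, t j) := by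
      rw [← exp_add, add_sub_cancel]
    linear_combination S * exp (x i * S) / (exp S - 1) *
        mul_prod_erase_bernoulliGenFun_shift x t i (h i) +
      S * G / (exp S - 1) * (exp (t i) - 1) * hcancel
  have hE : exp S - 1 ≠ 0 := sub_ne_zero.mpr hsum
  calc S * G = S * G / (exp S - 1) * ∑ i, (exp (t i) - 1) * exp (∑ j ∈ Ioi i, t j) := by
        rw [sum_exp_sub_one_mul_exp_sum_Ioi, div_mul_cancel₀ _ hE]
    _ = _ := by
      rw [mul_sum]
      exact sum_congr rfl fun i _ => (hterm i).symm
end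

section
/- Let r_1,…,r_m be complex numbers, n ≥ 1, and fix an index i and nonnegative integers l_j for j ≠ i with ∑_{j≠i} l_j ≤ n. Then ∑_{k_1+⋯+k_m = n+1, k_j ≥ 0} C(r_i − 1, k_i − 1) ∏_{j≠i} C(r_j − l_j, k_j − l_j) = (−1)^{l_i} C(n − r_1 − ⋯ − r_m, l_i), where l_i := n − ∑_{j≠i} l_j, C denotes the generalized binomial coefficient, and C(r,k) = 0 for k < 0. -/
/-!
Put `t i = 1` and `t j = l j` for `j ≠ i`. Every factor of a summand then has the form
`C(r j - t j, k j - t j)`, zero unless `t j ≤ k j`, so the substitution `k = a + t` turns the sum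
into `∑_{|a| = l_i} ∏ j, C(r j - t j, a j)`. Iterated Chu–Vandermonde evaluates this to
`C(∑ j, r j - n + l_i - 1, l_i)`, and reflection turns that into `(-1)^l_i C(n - ∑ j, r j, l_i)`.
-/

open Finset Polynomial

lemma gchoose_eq_choose (r : ℂ) (k : ℕ) : gchoose r k = Ring.choose r k := by
  rw [Ring.choose_eq_smul, ← aeval_eq_smeval, ← eval_map_algebraMap, descPochhammer_map,
    descPochhammer_eval_eq_prod_range, gchoose, smul_eq_mul, inv_mul_eq_div]

namespace Ring

variable {R : Type*} [CommRing R] [BinomialRing R]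

theorem choose_sum_eq_sum_piAntidiag_prod {ι : Type*} [DecidableEq ι] (s : Finset ι)
    (f : ι → R) (n : ℕ) :
    choose (∑ i ∈ s, f i) n = ∑ k ∈ piAntidiag s n, ∏ i ∈ s, choose (f i) (k i) := by
  induction s using Finset.cons_induction generalizing n with
  | empty => cases n <;> simp
  | cons a s has ih =>
    rw [sum_cons, add_choose_eq n (Commute.all _ _), piAntidiag_cons, sum_disjiUnion]
    refine sum_congr rfl fun p _ => ?_
    rw [ih, sum_map, mul_sum]
    refine sum_congr rfl fun g hg => ?_
    have hga : g a = 0 := by_contra fun h => has ((mem_piAntidiag.mp hg).2 a h)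
    rw [prod_cons]
    congr 1
    · simp [hga]
    · refine prod_congr rfl fun j hj => ?_
      simp [ne_of_mem_of_not_mem hj has]

theorem choose_add_sub_one_eq_neg_one_pow_mul_choose_neg (r : R) (n : ℕ) :
    choose (r + n - 1) n = (-1) ^ n * choose (-r) n := by
  rw [choose_neg, Units.smul_def, zsmul_eq_mul, Int.cast_negOnePow_natCast, ← mul_assoc,
    ← mul_pow, neg_one_mul, neg_neg, one_pow, one_mul]

end Ring

theorem Finset.sum_piAntidiag_univ_prod_shift {ι R : Type*} [Fintype ι] [DecidableEq ι]
    [CommSemiring R] (t : ι → ℕ) (f : ι → ℕ → R) {N : ℕ} (h : ∑ i, t i ≤ N) :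
    ∑ k ∈ piAntidiag univ N, ∏ i, (if k i < t i then 0 else f i (k i - t i)) =
      ∑ a ∈ piAntidiag univ (N - ∑ i, t i), ∏ i, f i (a i) := by
  have hvanish (k : ι → ℕ) (hk : ∏ i, (if k i < t i then 0 else f i (k i - t i)) ≠ 0) (i : ι) :
      t i ≤ k i :=
    not_lt.mp fun hi => hk (prod_eq_zero (mem_univ i) (if_pos hi))
  rw [← sum_filter_of_ne fun k _ => hvanish k]
  refine sum_nbij' (· - t) (· + t) (fun k hk => ?_) (fun a ha => ?_) (fun k hk => ?_)
    (fun a _ => add_tsub_cancel_right a t) (fun k hk => ?_)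
  · obtain ⟨hk, htk⟩ := mem_filter.mp hk
    simp only [mem_piAntidiag, Pi.sub_apply, ne_eq, mem_univ, implies_true, and_true] at hk ⊢
    rw [sum_tsub_distrib _ fun i _ => htk i, hk]
  · simp only [mem_filter, mem_piAntidiag, Pi.add_apply, ne_eq, mem_univ, implies_true, and_true,
      le_add_iff_nonneg_left, zero_le] at ha ⊢
    rw [sum_add_distrib, ha, tsub_add_cancel_of_le h]
  · exact tsub_add_cancel_of_le (mem_filter.mp hk).2
  · exact prod_congr rfl fun i _ => if_neg (not_lt.mpr ((mem_filter.mp hk).2 i))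

theorem chu_vandermonde_step_general (m n : ℕ) (r : Fin m → ℂ)
    (i : Fin m) (l : Fin m → ℕ) (hl : ∑ j ∈ Finset.univ.erase i, l j ≤ n) :
    ∑ k ∈ Finset.Nat.antidiagonalTuple m (n + 1),
      (if k i = 0 then 0 else gchoose (r i - 1) (k i - 1)) *
        ∏ j ∈ Finset.univ.erase i,
          (if k j < l j then 0 else gchoose (r j - l j) (k j - l j)) =
    (-1) ^ (n - ∑ j ∈ Finset.univ.erase i, l j) *
      gchoose ((n : ℂ) - ∑ j, r j) (n - ∑ j ∈ Finset.univ.erase i, l j) := by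
  set S := ∑ j ∈ univ.erase i, l j
  set t := Function.update l i 1
  have ht_erase : ∀ j ∈ univ.erase i, t j = l j := fun j hj =>
    Function.update_of_ne (ne_of_mem_erase hj) _ _
  have hti : t i = 1 := Function.update_self ..
  have hsum_t : ∑ j, t j = S + 1 := by
    rw [← add_sum_erase _ _ (mem_univ i), sum_congr rfl ht_erase, hti, add_comm]
  have hsummand (k : Fin m → ℕ) :
      (if k i = 0 then 0 else gchoose (r i - 1) (k i - 1)) *
        ∏ j ∈ univ.erase i, (if k j < l j then 0 else gchoose (r j - l j) (k j - l j)) =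
      ∏ j, (if k j < t j then 0 else gchoose (r j - t j) (k j - t j)) := by
    rw [← mul_prod_erase univ _ (mem_univ i)]
    congr 1
    · simp [hti]
    · exact prod_congr rfl fun j hj => by rw [ht_erase j hj]
  have hL : n + 1 - ∑ j, t j = n - S := by omega
  have harg : ∑ j, (r j - t j) = -((n : ℂ) - ∑ j, r j) + (n - S : ℕ) - 1 := by
    rw [sum_sub_distrib, ← Nat.cast_sum, hsum_t, Nat.cast_sub hl]
    push_cast
    ring
  rw [sum_congr rfl fun k _ => hsummand k, ← piAntidiag_univ_fin_eq_antidiagonalTuple,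
    sum_piAntidiag_univ_prod_shift t _ (by omega), hL]
  simp only [gchoose_eq_choose]
  rw [← Ring.choose_sum_eq_sum_piAntidiag_prod, harg,
    Ring.choose_add_sub_one_eq_neg_one_pow_mul_choose_neg, neg_neg]

/-- The Chu–Vandermonde computation in the proof of Theorem 1.1.  The terms
`C(r_i − 1, k_i − 1)` and `C(r_j − l_j, k_j − l_j)` are `0` when the lower index
is negative. Here `l_i = n − ∑_{j ≠ i} l_j`. -/
theorem chu_vandermonde_step (m n : ℕ) (hm : 0 < m) (hn : 1 ≤ n) (r : Fin m → ℂ)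
    (i : Fin m) (l : Fin m → ℕ) (hl : ∑ j ∈ Finset.univ.erase i, l j ≤ n) :
    ∑ k ∈ Finset.Nat.antidiagonalTuple m (n + 1),
      (if k i = 0 then 0 else gchoose (r i - 1) (k i - 1)) *
        ∏ j ∈ Finset.univ.erase i,
          (if k j < l j then 0 else gchoose (r j - l j) (k j - l j)) =
    (-1) ^ (n - ∑ j ∈ Finset.univ.erase i, l j) *
      gchoose ((n : ℂ) - ∑ j, r j) (n - ∑ j ∈ Finset.univ.erase i, l j) :=
  chu_vandermonde_step_general m n r i l hl
end

section
/- For positive integers n_1, n_2 and complex x_1, x_2: n_1 B_{n_1−1}(x_1) B_{n_2}(x_2) + n_2 B_{n_1}(x_1) B_{n_2−1}(x_2) = n_1 ∑_{k=0}^{n_2} C(n_2,k) B_{n_1+n_2−1−k}(x_1) B_k(x_2−x_1+1) + n_2 ∑_{k=0}^{n_1} C(n_1,k) B_{n_1+n_2−1−k}(x_2) B_k(x_1−x_2), with the convention B_{−1} := 0. -/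
open PowerSeries Finset

theorem MvPowerSeries.coeff_X_mul_of_pos {σ R : Type*} [Semiring R] (G : MvPowerSeries σ R)
    {s : σ} {e : σ →₀ ℕ} (he : 0 < e s) :
    coeff e (X s * G) = coeff (e - Finsupp.single s 1) G := by
  rw [X, coeff_monomial_mul, if_pos (Finsupp.single_le_iff.mpr he), one_mul]

namespace PowerSeries

section Bivariate

variable {R : Type*} [CommRing R]

theorem coeff_mul_subst_X {σ : Type*} [DecidableEq σ] (G : MvPowerSeries σ R) (f : R⟦X⟧) (s : σ)
    (e : σ →₀ ℕ) :
    MvPowerSeries.coeff e (G * subst (MvPowerSeries.X s) f) =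
      ∑ k ∈ range (e s + 1), MvPowerSeries.coeff (e - Finsupp.single s k) G * coeff k f := by
  rw [MvPowerSeries.coeff_mul]
  simp only [coeff_subst_single, mul_ite, mul_zero]
  rw [← sum_filter]
  have hfst {p : (σ →₀ ℕ) × (σ →₀ ℕ)} (hp : p ∈ (antidiagonal e).filter
      fun p => p.2 = Finsupp.single s (p.2 s)) :
      p.1 = e - Finsupp.single s (p.2 s) := by
    rw [mem_filter, HasAntidiagonal.mem_antidiagonal] at hp
    rw [← hp.2, ← hp.1, add_tsub_cancel_right]
  refine sum_nbij' (fun p => p.2 s) (fun k => (e - Finsupp.single s k, Finsupp.single s k))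
    ?_ ?_ ?_ ?_ ?_
  · intro p hp
    rw [mem_filter, HasAntidiagonal.mem_antidiagonal] at hp
    rw [mem_range, Nat.lt_succ_iff, ← hp.1, Finsupp.add_apply]
    exact Nat.le_add_left _ _
  · intro k hk
    rw [mem_range, Nat.lt_succ_iff] at hk
    rw [mem_filter, HasAntidiagonal.mem_antidiagonal, Finsupp.single_eq_same]
    exact ⟨tsub_add_cancel_of_le (Finsupp.single_le_iff.mpr hk), rfl⟩
  · intro p hp
    ext1
    · exact (hfst hp).symm
    · exact (mem_filter.mp hp).2.symm
  · intro k _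
    simp
  · intro p hp
    rw [hfst hp]

theorem coeff_subst_X_zero_mul_subst_X_one (f g : R⟦X⟧) (e : Fin 2 →₀ ℕ) :
    MvPowerSeries.coeff e (subst (MvPowerSeries.X 0) f * subst (MvPowerSeries.X 1) g) =
      coeff (e 0) f * coeff (e 1) g := by
  rw [coeff_mul_subst_X, sum_eq_single (e 1)]
  · have : e - Finsupp.single 1 (e 1) = Finsupp.single 0 (e 0) := by
      ext i; fin_cases i <;> simp
    simp [this, coeff_subst_single]
  · intro k hk hne
    rw [coeff_subst_single, if_neg, zero_mul]
    intro h
    have h₁ := congrArg (· 1) h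
    simp only [Finsupp.coe_tsub, Pi.sub_apply, Finsupp.single_eq_same, ne_eq, zero_ne_one,
      one_ne_zero, not_false_eq_true, Finsupp.single_eq_of_ne, tsub_zero] at h₁
    rw [mem_range] at hk
    omega
  · simp

end Bivariate

section BernoulliSeries

variable {A : Type*} [CommRing A] [Algebra ℚ A]

noncomputable def bernoulliSeries (x : A) : A⟦X⟧ :=
  mk fun n => Polynomial.aeval x ((1 / (n.factorial : ℚ)) • Polynomial.bernoulli n)

variable {τ : Type*} {a : MvPowerSeries τ A}

theorem subst_bernoulliSeries_mul (ha : HasSubst a) (x : A) :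
    subst a (bernoulliSeries x) * (subst a (exp A) - 1) = a * subst a (rescale x (exp A)) := by
  have h := congrArg (substAlgHom ha) (Polynomial.bernoulli_generating_function x)
  simp only [map_mul, map_sub, map_one, substAlgHom_X, coe_substAlgHom] at h
  exact h

theorem subst_rescale_exp_mul (ha : HasSubst a) (x y : A) :
    subst a (rescale x (exp A)) * subst a (rescale y (exp A)) =
      subst a (rescale (x + y) (exp A)) := by
  rw [← subst_mul ha, exp_mul_exp_eq_exp_add]

theorem subst_exp_sub_one_ne_zero (ha : HasSubst a) (ha₀ : a ≠ 0) : subst a (exp A) - 1 ≠ 0 := by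
  obtain ⟨w, hw⟩ := X_dvd_iff.mpr (by simp : constantCoeff (exp A - 1) = 0)
  have hw₀ : constantCoeff w = 1 := by
    have h := congrArg (coeff 1) hw
    rw [coeff_succ_X_mul, coeff_zero_eq_constantCoeff_apply] at h
    simpa [coeff_exp] using h.symm
  have hwu : IsUnit (substAlgHom (R := A) ha w) :=
    (isUnit_iff_constantCoeff.mpr (hw₀ ▸ isUnit_one)).map _
  rw [← coe_substAlgHom (R := A) ha, ← map_one (substAlgHom (R := A) ha), ← map_sub, hw, map_mul,
    substAlgHom_X]
  exact fun h => ha₀ (hwu.mul_left_eq_zero.mp h)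

local notation "X₀" => MvPowerSeries.X (R := A) (σ := Fin 2) 0
local notation "X₁" => MvPowerSeries.X (R := A) (σ := Fin 2) 1

theorem subst_X_zero_add_X_one_rescale_exp (x : A) :
    subst (X₀ + X₁) (rescale x (exp A)) =
      subst X₀ (rescale x (exp A)) * subst X₁ (rescale x (exp A)) := by
  ext e
  rw [coeff_subst_X_zero_add_X_one, coeff_subst_X_zero_mul_subst_X_one]
  simp only [coeff_rescale, coeff_exp, pow_add]
  have hq : ((e 0 + e 1).choose (e 0) : ℚ) * (1 / (e 0 + e 1).factorial) =
      1 / (e 0).factorial * (1 / (e 1).factorial) := by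
    rw [Nat.cast_add_choose]
    field_simp
  have hA := congrArg (algebraMap ℚ A) hq
  rw [map_mul, map_mul, map_natCast] at hA
  linear_combination (x ^ e 0 * x ^ e 1) * hA

theorem subst_X_zero_add_X_one_exp :
    subst (X₀ + X₁) (exp A) = subst X₀ (exp A) * subst X₁ (exp A) := by
  simpa only [rescale_one, RingHom.id_apply] using subst_X_zero_add_X_one_rescale_exp (1 : A)

theorem exp_denominators_ne_zero [IsDomain A] :
    (subst X₀ (exp A) - 1) * (subst X₁ (exp A) - 1) * (subst (X₀ + X₁) (exp A) - 1) ≠ 0 := by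
  have hX₀ : X₀ ≠ 0 := ne_of_apply_ne (MvPowerSeries.coeff (Finsupp.single 0 1))
    (by simp [MvPowerSeries.coeff_X])
  have hX₁ : X₁ ≠ 0 := ne_of_apply_ne (MvPowerSeries.coeff (Finsupp.single 1 1))
    (by simp [MvPowerSeries.coeff_X])
  have hX₀₁ : X₀ + X₁ ≠ 0 := ne_of_apply_ne (MvPowerSeries.coeff (Finsupp.single 0 1))
    (by simp [MvPowerSeries.coeff_X, Finsupp.single_eq_single_iff])
  exact mul_ne_zero (mul_ne_zero (subst_exp_sub_one_ne_zero (.X 0) hX₀)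
    (subst_exp_sub_one_ne_zero (.X 1) hX₁))
    (subst_exp_sub_one_ne_zero (.of_constantCoeff_zero (by simp)) hX₀₁)

theorem carlitz_generating_identity [IsDomain A] (x₁ x₂ : A) :
    (X₀ + X₁) * (subst X₀ (bernoulliSeries x₁) * subst X₁ (bernoulliSeries x₂)) =
      X₀ * (subst (X₀ + X₁) (bernoulliSeries x₁) * subst X₁ (bernoulliSeries (x₂ - x₁ + 1))) +
      X₁ * (subst (X₀ + X₁) (bernoulliSeries x₂) * subst X₀ (bernoulliSeries (x₁ - x₂))) := by
  have h₀ : HasSubst X₀ := .X 0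
  have h₁ : HasSubst X₁ := .X 1
  have h₀₁ : HasSubst (X₀ + X₁) := .of_constantCoeff_zero (by simp)
  set u := subst X₀ (exp A)
  set v := subst X₁ (exp A)
  set w := subst (X₀ + X₁) (exp A)
  set P := subst X₀ (rescale x₁ (exp A)) * subst X₁ (rescale x₂ (exp A))
  have hexp₁ : subst (X₀ + X₁) (rescale x₁ (exp A)) * subst X₁ (rescale (x₂ - x₁ + 1) (exp A)) =
      P * v := by
    rw [subst_X_zero_add_X_one_rescale_exp, mul_assoc, subst_rescale_exp_mul h₁,
      show x₁ + (x₂ - x₁ + 1) = x₂ + 1 by ring, ← subst_rescale_exp_mul h₁, rescale_one,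
      RingHom.id_apply, mul_assoc]
  have hexp₂ : subst (X₀ + X₁) (rescale x₂ (exp A)) * subst X₀ (rescale (x₁ - x₂) (exp A)) = P := by
    rw [subst_X_zero_add_X_one_rescale_exp, mul_right_comm, subst_rescale_exp_mul h₀,
      add_sub_cancel]
  have hL : (X₀ + X₁) * (subst X₀ (bernoulliSeries x₁) * subst X₁ (bernoulliSeries x₂)) *
      ((u - 1) * (v - 1) * (w - 1)) = (X₀ + X₁) * X₀ * X₁ * P * (w - 1) := by
    linear_combination
      ((X₀ + X₁) * (w - 1) * subst X₁ (bernoulliSeries x₂) * (v - 1)) *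
        subst_bernoulliSeries_mul h₀ x₁
      + ((X₀ + X₁) * (w - 1) * X₀ * subst X₀ (rescale x₁ (exp A))) *
        subst_bernoulliSeries_mul h₁ x₂
  have hR : (X₀ * (subst (X₀ + X₁) (bernoulliSeries x₁) *
      subst X₁ (bernoulliSeries (x₂ - x₁ + 1))) +
      X₁ * (subst (X₀ + X₁) (bernoulliSeries x₂) * subst X₀ (bernoulliSeries (x₁ - x₂)))) *
      ((u - 1) * (v - 1) * (w - 1)) = (X₀ + X₁) * X₀ * X₁ * P * (w - 1) := by
    linear_combination
      (X₀ * (u - 1) * subst X₁ (bernoulliSeries (x₂ - x₁ + 1)) * (v - 1)) *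
        subst_bernoulliSeries_mul h₀₁ x₁
      + (X₀ * (u - 1) * (X₀ + X₁) * subst (X₀ + X₁) (rescale x₁ (exp A))) *
        subst_bernoulliSeries_mul h₁ (x₂ - x₁ + 1)
      + (X₀ * (u - 1) * (X₀ + X₁) * X₁) * hexp₁
      + (X₁ * (v - 1) * subst X₀ (bernoulliSeries (x₁ - x₂)) * (u - 1)) *
        subst_bernoulliSeries_mul h₀₁ x₂
      + (X₁ * (v - 1) * (X₀ + X₁) * subst (X₀ + X₁) (rescale x₂ (exp A))) *
        subst_bernoulliSeries_mul h₀ (x₁ - x₂)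
      + (X₁ * (v - 1) * (X₀ + X₁) * X₀) * hexp₂
      - ((X₀ + X₁) * X₀ * X₁ * P) * subst_X_zero_add_X_one_exp (A := A)
  exact mul_right_cancel₀ exp_denominators_ne_zero (hL.trans hR.symm)

theorem carlitz_coeff_identity [IsDomain A] (m l : ℕ) (x₁ x₂ : A) :
    coeff m (bernoulliSeries x₁) * coeff (l + 1) (bernoulliSeries x₂) +
      coeff (m + 1) (bernoulliSeries x₁) * coeff l (bernoulliSeries x₂) =
    ∑ k ∈ range (l + 1 + 1), ((m + (l + 1 - k)).choose m : A) *
        coeff (m + (l + 1 - k)) (bernoulliSeries x₁) * coeff k (bernoulliSeries (x₂ - x₁ + 1)) +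
      ∑ k ∈ range (m + 1 + 1), ((l + (m + 1 - k)).choose l : A) *
        coeff (l + (m + 1 - k)) (bernoulliSeries x₂) * coeff k (bernoulliSeries (x₁ - x₂)) := by
  set e : Fin 2 →₀ ℕ := Finsupp.single 0 (m + 1) + Finsupp.single 1 (l + 1) with he
  have h := congrArg (MvPowerSeries.coeff e) (carlitz_generating_identity x₁ x₂)
  have he₀ : 0 < e 0 := by simp [he]
  have he₁ : 0 < e 1 := by simp [he]
  rw [add_mul, map_add, map_add, MvPowerSeries.coeff_X_mul_of_pos _ he₀,
    MvPowerSeries.coeff_X_mul_of_pos _ he₁, MvPowerSeries.coeff_X_mul_of_pos _ he₀,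
    MvPowerSeries.coeff_X_mul_of_pos _ he₁, coeff_subst_X_zero_mul_subst_X_one,
    coeff_subst_X_zero_mul_subst_X_one, coeff_mul_subst_X, coeff_mul_subst_X] at h
  simp only [he, coeff_subst_X_zero_add_X_one] at h
  simpa [add_comm _ l, ← Nat.choose_symm_add (a := l)] using h

end BernoulliSeries

theorem coeff_bernoulliSeries_eq_Bp (n : ℕ) (x : ℂ) :
    coeff n (bernoulliSeries x) = (n.factorial : ℂ)⁻¹ * Bp n x := by
  rw [bernoulliSeries, coeff_mk, map_smul, Rat.smul_def, Bp]
  push_cast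
  ring

end PowerSeries

theorem Finset.natCast_succ_mul_sum_choose_eq {K : Type*} [Field K] [CharZero K] {a b N : ℕ}
    (hN : N = a + b) (f g : ℕ → K) :
    ((a + 1 : ℕ) : K) * ∑ k ∈ range (b + 1), (b.choose k : K) * f (N - k) * g k =
      ((a + 1).factorial * b.factorial : K) * ∑ k ∈ range (b + 1), ((a + (b - k)).choose a : K) *
        (((a + (b - k)).factorial : K)⁻¹ * f (a + (b - k))) * ((k.factorial : K)⁻¹ * g k) := by
  rw [mul_sum, mul_sum]
  refine sum_congr rfl fun k hk => ?_
  obtain ⟨j, rfl⟩ : ∃ j, b = j + k := ⟨b - k, by rw [mem_range] at hk; omega⟩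
  rw [hN, Nat.add_sub_cancel, ← add_assoc, Nat.add_sub_cancel, Nat.cast_add_choose,
    ← Nat.choose_symm_add, Nat.cast_add_choose]
  push_cast [Nat.factorial_succ]
  field_simp [Nat.factorial_ne_zero]

/-- The `m = 2` case of Lemma 2.1 (essentially Carlitz's identity).  Since
`n₁, n₂ ≥ 1`, all subscripts `n₁ - 1`, `n₂ - 1`, `n₁ + n₂ - 1 - k` are
nonnegative, so the convention `B_{-1} = 0` is not needed. -/
theorem carlitz_two (n₁ n₂ : ℕ) (h₁ : 0 < n₁) (h₂ : 0 < n₂) (x₁ x₂ : ℂ) :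
    (n₁ : ℂ) * Bp (n₁ - 1) x₁ * Bp n₂ x₂ + (n₂ : ℂ) * Bp n₁ x₁ * Bp (n₂ - 1) x₂ =
    (n₁ : ℂ) * ∑ k ∈ Finset.range (n₂ + 1),
        (n₂.choose k : ℂ) * Bp (n₁ + n₂ - 1 - k) x₁ * Bp k (x₂ - x₁ + 1) +
    (n₂ : ℂ) * ∑ k ∈ Finset.range (n₁ + 1),
        (n₁.choose k : ℂ) * Bp (n₁ + n₂ - 1 - k) x₂ * Bp k (x₁ - x₂) := by
  obtain ⟨m, rfl⟩ := Nat.exists_eq_add_one_of_ne_zero h₁.ne'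
  obtain ⟨l, rfl⟩ := Nat.exists_eq_add_one_of_ne_zero h₂.ne'
  have key := carlitz_coeff_identity m l x₁ x₂
  simp only [coeff_bernoulliSeries_eq_Bp] at key
  rw [natCast_succ_mul_sum_choose_eq (a := m) (b := l + 1) (by omega) (Bp · x₁)
      (Bp · (x₂ - x₁ + 1)),
    natCast_succ_mul_sum_choose_eq (a := l) (b := m + 1) (by omega) (Bp · x₂) (Bp · (x₁ - x₂)),
    mul_comm ((l + 1).factorial : ℂ), ← mul_add, ← key]
  simp only [Nat.add_sub_cancel]
  push_cast [Nat.factorial_succ]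
  field_simp [Nat.factorial_ne_zero]
end
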